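/- arXiv:2501.17103 — 3 statements merged into one kernel-verified Lean document; each statement's English description precedes it below -/
import Mathlib

section
/- Let M ≥ 1, λ ∈ (0,1), h > 0 with M h ≤ 1, and A₁, A ≥ 0. Let N be the M×M lower shift matrix and B = (1-λ)I + λN. Let (f^n)_{n≥0} ⊂ ℝ^M satisfy |f^n_1| ≤ A₁ h and |f^n_j| ≤ A h² for 2 ≤ j ≤ M and all n, and let (e^n) satisfy e^0 = 0 and e^{n+1} = B e^n + f^n. Then for every n ≥ 0 and every 1 ≤ p ≤ M, |e^n_p| ≤ (A₁ + A) h / λ; in particular ‖e^n‖_∞ ≤ (A₁+A) h / λ. -/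
/-!
The error at node `p` stays below `S_p / λ`, where `S_p = F₀ + ⋯ + F_p` and `F_j` bounds the local
error at node `j`. This invariant is preserved by `B = (1-λ) I + λ N`: the node `p` contributes
`(1-λ) S_p / λ`, its upwind neighbour `λ S_{p-1} / λ = S_p - F_p`, and the local error `F_p`.
With `F₀ = A₁ h` and `F_j = A h²` the partial sums are `A₁ h + p A h² ≤ (A₁ + A) h` because
`p h ≤ M h ≤ 1`: the second-order local errors accumulate over at most `1 / h` nodes.
-/

open Finset Matrix

lemma abs_convex_comb_add_le {l a b c S T : ℝ} (hl0 : 0 < l) (hl1 : l ≤ 1)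
    (ha : |a| ≤ S / l) (hb : |b| ≤ T / l) (hc : |c| ≤ S - T) :
    |(1 - l) * a + l * b + c| ≤ S / l := by
  have h1l : 0 ≤ 1 - l := by linarith
  calc |(1 - l) * a + l * b + c| ≤ (1 - l) * |a| + l * |b| + |c| := by
        refine (abs_add_le _ _).trans (add_le_add_left ((abs_add_le _ _).trans_eq ?_) _)
        rw [abs_mul, abs_mul, abs_of_nonneg h1l, abs_of_pos hl0]
    _ ≤ (1 - l) * (S / l) + l * (T / l) + (S - T) := by gcongr
    _ = S / l := by field_simp; ring

section LowerShift

variable {M : ℕ} {N : Matrix (Fin M) (Fin M) ℝ}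

lemma lowerShift_mulVec_of_val_eq_zero
    (hN : ∀ p q : Fin M, N p q = if (p : ℕ) = (q : ℕ) + 1 then 1 else 0)
    (v : Fin M → ℝ) {p : Fin M} (hp : (p : ℕ) = 0) : (N *ᵥ v) p = 0 := by
  rw [mulVec, dotProduct]
  exact sum_eq_zero fun q _ => by simp [hN, hp]

lemma lowerShift_mulVec_of_val_eq_succ
    (hN : ∀ p q : Fin M, N p q = if (p : ℕ) = (q : ℕ) + 1 then 1 else 0)
    (v : Fin M → ℝ) {p q : Fin M} (hpq : (p : ℕ) = q + 1) : (N *ᵥ v) p = v q := by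
  rw [mulVec, dotProduct, sum_eq_single q]
  · simp [hN, hpq]
  · intro r _ hrq
    have : (p : ℕ) ≠ r + 1 := fun h => hrq (Fin.ext (by omega))
    simp [hN, this]
  · simp

lemma abs_lowerShift_mulVec_le
    (hN : ∀ p q : Fin M, N p q = if (p : ℕ) = (q : ℕ) + 1 then 1 else 0)
    {v : Fin M → ℝ} {g : ℕ → ℝ} (hg0 : g 0 = 0) (hv : ∀ q : Fin M, |v q| ≤ g (q + 1))
    (p : Fin M) : |(N *ᵥ v) p| ≤ g p := by
  by_cases hp : (p : ℕ) = 0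
  · rw [lowerShift_mulVec_of_val_eq_zero hN v hp, hp, hg0, abs_zero]
  · have hq : (p : ℕ) - 1 < M := by omega
    rw [lowerShift_mulVec_of_val_eq_succ hN v (q := ⟨_, hq⟩) (by simp only; omega)]
    exact (hv _).trans_eq (congrArg g (by simp only; omega))

lemma upwind_mulVec_apply (l : ℝ) (v : Fin M → ℝ) (p : Fin M) :
    (((1 - l) • (1 : Matrix (Fin M) (Fin M) ℝ) + l • N) *ᵥ v) p
      = (1 - l) * v p + l * (N *ᵥ v) p := by
  simp [add_mulVec, smul_mulVec]

theorem abs_upwind_error_le_partialSum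
    (hN : ∀ p q : Fin M, N p q = if (p : ℕ) = (q : ℕ) + 1 then 1 else 0)
    {l : ℝ} (hl0 : 0 < l) (hl1 : l ≤ 1) {f e : ℕ → Fin M → ℝ} {F : ℕ → ℝ}
    (hf : ∀ (n : ℕ) (p : Fin M), |f n p| ≤ F p) (he0 : e 0 = 0)
    (he : ∀ n, e (n + 1) = ((1 - l) • (1 : Matrix (Fin M) (Fin M) ℝ) + l • N) *ᵥ e n + f n)
    (n : ℕ) (p : Fin M) : |e n p| ≤ (∑ j ∈ range (p + 1), F j) / l := by
  induction n generalizing p with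
  | zero =>
    have hF : ∀ j ∈ range (p + 1), 0 ≤ F j := fun j hj =>
      (abs_nonneg _).trans (hf 0 ⟨j, by have := mem_range.1 hj; omega⟩)
    rw [he0, Pi.zero_apply, abs_zero]
    exact div_nonneg (sum_nonneg hF) hl0.le
  | succ n ih =>
    have hshift : |(N *ᵥ e n) p| ≤ (∑ j ∈ range p, F j) / l :=
      abs_lowerShift_mulVec_le hN (g := fun k => (∑ j ∈ range k, F j) / l) (by simp) ih p
    rw [he, Pi.add_apply, upwind_mulVec_apply]
    exact abs_convex_comb_add_le hl0 hl1 (ih p) hshift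
      ((hf n p).trans_eq (by rw [sum_range_succ]; ring))

end LowerShift

theorem stmt8_general (M : ℕ) (l h A1 A : ℝ)
    (hl : l ∈ Set.Ioo (0 : ℝ) 1) (hh : 0 < h) (hMh : (M : ℝ) * h ≤ 1)
    (hA1 : 0 ≤ A1) (hA : 0 ≤ A)
    (N : Matrix (Fin M) (Fin M) ℝ)
    (hN : ∀ p q : Fin M, N p q = if (p : ℕ) = (q : ℕ) + 1 then 1 else 0)
    (B : Matrix (Fin M) (Fin M) ℝ)
    (hB : B = (1 - l) • (1 : Matrix (Fin M) (Fin M) ℝ) + l • N)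
    (f : ℕ → Fin M → ℝ)
    (hf1 : ∀ (n : ℕ) (j : Fin M), (j : ℕ) = 0 → |f n j| ≤ A1 * h)
    (hf2 : ∀ (n : ℕ) (j : Fin M), 1 ≤ (j : ℕ) → |f n j| ≤ A * h ^ 2)
    (e : ℕ → Fin M → ℝ) (he0 : e 0 = 0)
    (he : ∀ n : ℕ, e (n + 1) = B.mulVec (e n) + f n) :
    (∀ (n : ℕ) (p : Fin M), |e n p| ≤ (A1 + A) * h / l) ∧
      (∀ n : ℕ, ‖e n‖ ≤ (A1 + A) * h / l) := by
  subst hB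
  set F : ℕ → ℝ := fun j => if j = 0 then A1 * h else A * h ^ 2
  have hf : ∀ (n : ℕ) (p : Fin M), |f n p| ≤ F p := fun n p => by
    by_cases hp : (p : ℕ) = 0
    · simpa [F, hp] using hf1 n p hp
    · simpa [F, hp] using hf2 n p (by omega)
  have hpartial (p : Fin M) : ∑ j ∈ range (p + 1), F j ≤ (A1 + A) * h := by
    have hph : (p : ℝ) * h ≤ 1 :=
      le_trans (by gcongr; exact_mod_cast p.isLt.le) hMh
    simp only [sum_range_succ', F, Nat.succ_ne_zero, if_false, if_true, sum_const, card_range,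
      nsmul_eq_mul]
    nlinarith [mul_le_mul_of_nonneg_left hph (mul_nonneg hA hh.le)]
  have hbound (n : ℕ) (p : Fin M) : |e n p| ≤ (A1 + A) * h / l :=
    (abs_upwind_error_le_partialSum hN hl.1 hl.2.le hf he0 he n p).trans
      (div_le_div_of_nonneg_right (hpartial p) hl.1.le)
  refine ⟨hbound, fun n => (pi_norm_le_iff_of_nonneg (by have := hl.1; positivity)).2 fun p => ?_⟩
  exact (Real.norm_eq_abs _).trans_le (hbound n p)

/-- Main estimate of Appendix C: for the upwind iteration `eⁿ⁺¹ = B eⁿ + fⁿ`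
with `B = (1-λ) I + λ N` (`N` the lower shift matrix), `e⁰ = 0`, and local
errors of first order at the first node (`|fⁿ₁| ≤ A₁ h`) and second order
elsewhere (`|fⁿ_j| ≤ A h²`), the global error satisfies
`|eⁿ_p| ≤ (A₁ + A) h / λ` for all `n, p`; in particular
`‖eⁿ‖_∞ ≤ (A₁ + A) h / λ`. -/
theorem stmt8 (M : ℕ) (hM : 1 ≤ M) (l h A1 A : ℝ)
    (hl : l ∈ Set.Ioo (0 : ℝ) 1) (hh : 0 < h) (hMh : (M : ℝ) * h ≤ 1)
    (hA1 : 0 ≤ A1) (hA : 0 ≤ A)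
    (N : Matrix (Fin M) (Fin M) ℝ)
    (hN : ∀ p q : Fin M, N p q = if (p : ℕ) = (q : ℕ) + 1 then 1 else 0)
    (B : Matrix (Fin M) (Fin M) ℝ)
    (hB : B = (1 - l) • (1 : Matrix (Fin M) (Fin M) ℝ) + l • N)
    (f : ℕ → Fin M → ℝ)
    (hf1 : ∀ (n : ℕ) (j : Fin M), (j : ℕ) = 0 → |f n j| ≤ A1 * h)
    (hf2 : ∀ (n : ℕ) (j : Fin M), 1 ≤ (j : ℕ) → |f n j| ≤ A * h ^ 2)
    (e : ℕ → Fin M → ℝ) (he0 : e 0 = 0)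
    (he : ∀ n : ℕ, e (n + 1) = B.mulVec (e n) + f n) :
    (∀ (n : ℕ) (p : Fin M), |e n p| ≤ (A1 + A) * h / l) ∧
      (∀ n : ℕ, ‖e n‖ ≤ (A1 + A) * h / l) :=
  stmt8_general M l h A1 A hl hh hMh hA1 hA N hN B hB f hf1 hf2 e he0 he
end

section
/- Let M ≥ 1, λ ∈ (0,1), let N be the M×M lower shift matrix, B = (1-λ)I + λN, let (f^k)_{k≥0} ⊂ ℝ^M, and define e^n = ∑_{k=0}^{n-1} B^{n-1-k} f^k. Then for every 1 ≤ p ≤ M and n ≥ 1, e^n_p = ∑_{q=1}^{p} λ^{p-q} ∑_{k=p-q}^{n-1} C(k, p-q) (1-λ)^{k-(p-q)} f^{n-k-1}_q. -/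
/-!
The two summands of `B = (1 - λ) I + λ N` commute, so the binomial theorem gives
`B ^ m = ∑ j, C(m, j) (1 - λ) ^ (m - j) λ ^ j N ^ j`. Since `N ^ j` is the indicator of the
`j`-th subdiagonal, `(B ^ m)_{pq} = C(m, p - q) (1 - λ) ^ (m - (p - q)) λ ^ (p - q)` for `q ≤ p`
and `0` otherwise. Reversing the time sum (`m = n - 1 - k`) and dropping the terms `m < p - q`,
where the binomial coefficient vanishes, gives the closed form.
-/

open Finset

namespace Matrix

variable {R : Type*} [CommSemiring R] {M : ℕ}

theorem pow_apply_of_shift {N : Matrix (Fin M) (Fin M) R}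
    (hN : ∀ p q : Fin M, N p q = if (p : ℕ) = (q : ℕ) + 1 then 1 else 0) (j : ℕ) (p q : Fin M) :
    (N ^ j) p q = if (p : ℕ) = (q : ℕ) + j then 1 else 0 := by
  induction j generalizing q with
  | zero => simp [one_apply, Fin.ext_iff]
  | succ j ih =>
    rw [pow_succ, mul_apply]
    by_cases hq : (q : ℕ) + 1 < M
    · rw [sum_eq_single ⟨q + 1, hq⟩ (fun r _ hr => ?_) (by simp)]
      · rw [ih, hN, if_pos rfl, mul_one]
        exact if_congr (by dsimp only; omega) rfl rfl
      · rw [hN, if_neg (fun h => hr (Fin.ext h)), mul_zero]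
    · rw [if_neg (by omega)]
      refine sum_eq_zero fun r _ => ?_
      rw [hN, if_neg (by omega), mul_zero]

theorem smul_one_add_smul_pow_apply_of_shift {N : Matrix (Fin M) (Fin M) R}
    (hN : ∀ p q : Fin M, N p q = if (p : ℕ) = (q : ℕ) + 1 then 1 else 0) (a b : R) (m : ℕ)
    (p q : Fin M) :
    ((a • 1 + b • N) ^ m) p q =
      if q ≤ p then (m.choose (p - q : ℕ) : R) * a ^ (m - (p - q : ℕ)) * b ^ (p - q : ℕ)
      else 0 := by
  have hcomm : Commute (b • N) (a • (1 : Matrix (Fin M) (Fin M) R)) :=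
    (Commute.one_right N).smul_left b |>.smul_right a
  rw [add_comm, hcomm.add_pow, sum_apply]
  have hterm : ∀ j ∈ range (m + 1),
      ((b • N) ^ j * (a • 1) ^ (m - j) * (m.choose j : Matrix (Fin M) (Fin M) R)) p q =
        if (p : ℕ) = q + j then (m.choose j : R) * a ^ (m - j) * b ^ j else 0 := by
    intro j _
    rw [smul_pow, smul_pow, one_pow, Matrix.mul_smul, mul_one, ← Nat.cast_comm, ← nsmul_eq_mul]
    simp only [smul_apply, pow_apply_of_shift hN, smul_eq_mul, nsmul_eq_mul]
    split_ifs <;> ring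
  rw [sum_congr rfl hterm]
  split_ifs with hqp
  · rw [Fin.le_def] at hqp
    have hcond : ∀ j, ((p : ℕ) = q + j ↔ (p - q : ℕ) = j) := fun j => by omega
    simp only [hcond, sum_ite_eq, mem_range]
    split_ifs with hd
    · rfl
    · rw [Nat.choose_eq_zero_of_lt (by omega), Nat.cast_zero, zero_mul, zero_mul]
  · exact sum_eq_zero fun j _ => if_neg (by rw [Fin.le_def] at hqp; omega)

end Matrix

theorem Finset.sum_range_choose_mul_eq_sum_Ico {R : Type*} [Semiring R] (n d : ℕ) (g : ℕ → R) :
    ∑ m ∈ range n, (m.choose d : R) * g m = ∑ m ∈ Ico d n, (m.choose d : R) * g m := by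
  refine (sum_subset (fun m hm => ?_) fun m hm hmd => ?_).symm
  · simp only [mem_Ico, mem_range] at hm ⊢; exact hm.2
  · simp only [mem_Ico, mem_range, not_and, not_lt] at hm hmd
    rw [Nat.choose_eq_zero_of_lt (by omega), Nat.cast_zero, zero_mul]

theorem stmt9_general (M : ℕ) (l : ℝ)
    (N : Matrix (Fin M) (Fin M) ℝ)
    (hN : ∀ p q : Fin M, N p q = if (p : ℕ) = (q : ℕ) + 1 then 1 else 0)
    (B : Matrix (Fin M) (Fin M) ℝ)
    (hB : B = (1 - l) • (1 : Matrix (Fin M) (Fin M) ℝ) + l • N)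
    (f e : ℕ → Fin M → ℝ)
    (he : ∀ n : ℕ, e n = ∑ k ∈ Finset.range n, (B ^ (n - 1 - k)).mulVec (f k)) :
    ∀ n : ℕ, 1 ≤ n → ∀ p : Fin M,
      e n p = ∑ q ∈ Finset.Iic p,
        l ^ ((p : ℕ) - (q : ℕ)) *
          ∑ k ∈ Finset.Ico ((p : ℕ) - (q : ℕ)) n,
            (k.choose ((p : ℕ) - (q : ℕ)) : ℝ) * (1 - l) ^ (k - ((p : ℕ) - (q : ℕ))) *
              f (n - k - 1) q := by
  intro n _ p
  have hB_apply := Matrix.smul_one_add_smul_pow_apply_of_shift hN (1 - l) l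
  calc e n p = ∑ m ∈ range n, ∑ q, (B ^ m) p q * f (n - 1 - m) q := by
        rw [he, ← sum_range_reflect, Finset.sum_apply]
        refine sum_congr rfl fun m hm => ?_
        rw [mem_range] at hm
        rw [show n - 1 - (n - 1 - m) = m by omega]
        rfl
    _ = ∑ q ∈ Iic p, ∑ m ∈ range n, (B ^ m) p q * f (n - 1 - m) q := by
        rw [sum_comm]
        refine (sum_subset (subset_univ _) fun q _ hq => sum_eq_zero fun m _ => ?_).symm
        rw [hB, hB_apply, if_neg (by simpa using hq), zero_mul]
    _ = _ := by
        refine sum_congr rfl fun q hq => ?_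
        rw [mem_Iic] at hq
        simp only [hB, hB_apply, if_pos hq, mul_assoc, sum_range_choose_mul_eq_sum_Ico, mul_sum]
        refine sum_congr rfl fun k _ => ?_
        rw [Nat.sub_right_comm]
        ring

/-- Closed form of the error components (Appendix C): with
`B = (1-λ) I + λ N` (`N` the lower shift matrix) and
`eⁿ = ∑_{k=0}^{n-1} B^{n-1-k} fᵏ`, for `n ≥ 1` and every index `p`,
`eⁿ_p = ∑_{q=1}^{p} λ^{p-q} ∑_{k=p-q}^{n-1} C(k, p-q) (1-λ)^{k-(p-q)} f^{n-k-1}_q`. -/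
theorem stmt9 (M : ℕ) (hM : 1 ≤ M) (l : ℝ) (hl : l ∈ Set.Ioo (0 : ℝ) 1)
    (N : Matrix (Fin M) (Fin M) ℝ)
    (hN : ∀ p q : Fin M, N p q = if (p : ℕ) = (q : ℕ) + 1 then 1 else 0)
    (B : Matrix (Fin M) (Fin M) ℝ)
    (hB : B = (1 - l) • (1 : Matrix (Fin M) (Fin M) ℝ) + l • N)
    (f e : ℕ → Fin M → ℝ)
    (he : ∀ n : ℕ, e n = ∑ k ∈ Finset.range n, (B ^ (n - 1 - k)).mulVec (f k)) :
    ∀ n : ℕ, 1 ≤ n → ∀ p : Fin M,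
      e n p = ∑ q ∈ Finset.Iic p,
        l ^ ((p : ℕ) - (q : ℕ)) *
          ∑ k ∈ Finset.Ico ((p : ℕ) - (q : ℕ)) n,
            (k.choose ((p : ℕ) - (q : ℕ)) : ℝ) * (1 - l) ^ (k - ((p : ℕ) - (q : ℕ))) *
              f (n - k - 1) q :=
  stmt9_general M l N hN B hB f e he
end

section
/- Let T > 0, λ ∈ (0,1], and let u : ℝ × [0, T] → ℝ be twice continuously differentiable with all first and second partial derivatives bounded in absolute value by K, and satisfying u_t + u_x = 0. Define g(t) = u(0, t). Then there is a constant A₁ depending only on K and λ such that for all h > 0 and t with t + λh ≤ T: |u(h/2, t + λh) - (1-λ) u(h/2, t) - λ g(t)| ≤ A₁ h. -/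
open Set

/-! Both the time step and the replacement of `u(-h/2, t)` by `u(0, t)` are controlled by the
mean value inequality: writing the error as
`(u(h/2, t + λh) - u(h/2, t)) + λ (u(h/2, t) - u(0, t))`, each difference is bounded by `K` times
the distance of the two points, that is by `K λ h` and `K h / 2`. -/

theorem Convex.norm_image_sub_le_of_norm_iteratedFDerivWithin_one_le {E F : Type*}
    [NormedAddCommGroup E] [NormedSpace ℝ E] [NormedAddCommGroup F] [NormedSpace ℝ F]
    {f : E → F} {s : Set E} {K : ℝ} {x y : E} (hs : Convex ℝ s) (hs' : UniqueDiffOn ℝ s)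
    (hf : DifferentiableOn ℝ f s) (bound : ∀ z ∈ s, ‖iteratedFDerivWithin ℝ 1 f s z‖ ≤ K)
    (hx : x ∈ s) (hy : y ∈ s) : ‖f y - f x‖ ≤ K * ‖y - x‖ :=
  hs.norm_image_sub_le_of_norm_fderivWithin_le hf
    (fun z hz => norm_iteratedFDerivWithin_one f (hs' z hz) ▸ bound z hz) hx hy

theorem abs_sub_convexCombination_le (a b c l : ℝ) (hl : 0 ≤ l) :
    |a - (1 - l) * b - l * c| ≤ |a - b| + l * |b - c| :=
  calc |a - (1 - l) * b - l * c| = |(a - b) + l * (b - c)| := by ring_nf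
    _ ≤ |a - b| + |l * (b - c)| := abs_add_le _ _
    _ = |a - b| + l * |b - c| := by rw [abs_mul, abs_of_nonneg hl]

section

variable {E F : Type*} [SeminormedAddCommGroup E] [SeminormedAddCommGroup F]

theorem Prod.norm_mk_sub_mk_left (a : E) (b c : F) : ‖(a, b) - (a, c)‖ = ‖b - c‖ := by
  simp [Prod.norm_def]

theorem Prod.norm_mk_sub_mk_right (a b : E) (c : F) : ‖(a, c) - (b, c)‖ = ‖a - b‖ := by
  simp [Prod.norm_def]

end

theorem stmt15_general (T K l : ℝ) (hl : l ∈ Set.Ioc (0 : ℝ) 1)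
    (u : ℝ × ℝ → ℝ)
    (hu : ContDiffOn ℝ 2 u ((univ : Set ℝ) ×ˢ Icc (0 : ℝ) T))
    (hbound1 : ∀ p ∈ ((univ : Set ℝ) ×ˢ Icc (0 : ℝ) T),
      ‖iteratedFDerivWithin ℝ 1 u ((univ : Set ℝ) ×ˢ Icc (0 : ℝ) T) p‖ ≤ K)
    (g : ℝ → ℝ) (hg : ∀ t, g t = u (0, t)) :
    ∃ A₁ : ℝ, ∀ h t : ℝ, 0 < h → 0 ≤ t → t + l * h ≤ T →
      |u (h / 2, t + l * h) - (1 - l) * u (h / 2, t) - l * g t| ≤ A₁ * h := by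
  refine ⟨3 / 2 * l * K, fun h t hh ht hle => ?_⟩
  set s : Set (ℝ × ℝ) := (univ : Set ℝ) ×ˢ Icc (0 : ℝ) T
  have hlh : 0 < l * h := mul_pos hl.1 hh
  have lip : ∀ p ∈ s, ∀ q ∈ s, ‖u q - u p‖ ≤ K * ‖q - p‖ := fun p hp q hq =>
    (convex_univ.prod (convex_Icc 0 T)).norm_image_sub_le_of_norm_iteratedFDerivWithin_one_le
      (uniqueDiffOn_univ.prod (uniqueDiffOn_Icc (by linarith)))
      (hu.differentiableOn two_ne_zero) hbound1 hp hq
  have hnow : (h / 2, t) ∈ s := mk_mem_prod (mem_univ _) ⟨ht, by linarith⟩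
  have hnext : (h / 2, t + l * h) ∈ s := mk_mem_prod (mem_univ _) ⟨by linarith, hle⟩
  have hbdry : (0, t) ∈ s := mk_mem_prod (mem_univ _) ⟨ht, by linarith⟩
  have htime : |u (h / 2, t + l * h) - u (h / 2, t)| ≤ K * (l * h) := by
    have := lip _ hnow _ hnext
    rwa [Prod.norm_mk_sub_mk_left, add_sub_cancel_left, Real.norm_of_nonneg hlh.le,
      Real.norm_eq_abs] at this
  have hspace : |u (h / 2, t) - u (0, t)| ≤ K * (h / 2) := by
    have := lip _ hbdry _ hnow
    rwa [Prod.norm_mk_sub_mk_right, sub_zero, Real.norm_of_nonneg (half_pos hh).le,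
      Real.norm_eq_abs] at this
  calc |u (h / 2, t + l * h) - (1 - l) * u (h / 2, t) - l * g t|
      ≤ |u (h / 2, t + l * h) - u (h / 2, t)| + l * |u (h / 2, t) - u (0, t)| :=
        hg t ▸ abs_sub_convexCombination_le _ _ _ l hl.1.le
    _ ≤ K * (l * h) + l * (K * (h / 2)) := by gcongr; exact hl.1.le
    _ = 3 / 2 * l * K * h := by ring

/-- Boundary local truncation error of the upwind scheme for `u_t + u_x = 0`:
if `u : ℝ × [0,T] → ℝ` is twice continuously differentiable with all first and
second partial derivatives bounded by `K` and satisfies the advection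
equation, and `g(t) = u(0,t)`, then there is a constant `A₁` depending only on
`K` and `λ` such that
`|u(h/2, t + λh) - (1-λ) u(h/2, t) - λ g(t)| ≤ A₁ h`
for all `h > 0` and `t` with `0 ≤ t` and `t + λh ≤ T`. -/
theorem stmt15 (T K l : ℝ) (hT : 0 < T) (hl : l ∈ Set.Ioc (0 : ℝ) 1)
    (u : ℝ × ℝ → ℝ)
    (hu : ContDiffOn ℝ 2 u ((univ : Set ℝ) ×ˢ Icc (0 : ℝ) T))
    (hbound1 : ∀ p ∈ ((univ : Set ℝ) ×ˢ Icc (0 : ℝ) T),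
      ‖iteratedFDerivWithin ℝ 1 u ((univ : Set ℝ) ×ˢ Icc (0 : ℝ) T) p‖ ≤ K)
    (hbound2 : ∀ p ∈ ((univ : Set ℝ) ×ˢ Icc (0 : ℝ) T),
      ‖iteratedFDerivWithin ℝ 2 u ((univ : Set ℝ) ×ˢ Icc (0 : ℝ) T) p‖ ≤ K)
    (hpde : ∀ p ∈ ((univ : Set ℝ) ×ˢ Icc (0 : ℝ) T),
      fderivWithin ℝ u ((univ : Set ℝ) ×ˢ Icc (0 : ℝ) T) p ((0 : ℝ), (1 : ℝ)) +
        fderivWithin ℝ u ((univ : Set ℝ) ×ˢ Icc (0 : ℝ) T) p ((1 : ℝ), (0 : ℝ)) = 0)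
    (g : ℝ → ℝ) (hg : ∀ t, g t = u (0, t)) :
    ∃ A₁ : ℝ, ∀ h t : ℝ, 0 < h → 0 ≤ t → t + l * h ≤ T →
      |u (h / 2, t + l * h) - (1 - l) * u (h / 2, t) - l * g t| ≤ A₁ * h :=
  stmt15_general T K l hl u hu hbound1 g hg
end
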